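/- arXiv:1804.09653 — 6 statements merged into one kernel-verified Lean document; each statement's English description precedes it below -/
import Mathlib

section
/- Let P be a finite nonempty set of points in ℝ^d, and let c be the center and r the radius of its minimum enclosing ball. Then c lies in the convex hull of the set of points of P that are at distance exactly r from c. -/
/-- `IsMEB P c r` says the closed ball of center `c` and radius `r` is the minimum enclosing
ball of `P`: it contains `P`, and any ball containing `P` has radius at least `r`. -/
def IsMEB {d : ℕ} (P : Set (EuclideanSpace ℝ (Fin d)))
    (c : EuclideanSpace ℝ (Fin d)) (r : ℝ) : Prop :=
  (∀ p ∈ P, dist p c ≤ r) ∧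
    ∀ (c' : EuclideanSpace ℝ (Fin d)) (r' : ℝ), (∀ p ∈ P, dist p c' ≤ r') → r ≤ r'

/-!
If `c` were not in the convex hull of the farthest points, a hyperplane would separate it from
them, i.e. some direction `v` points from `c` towards every farthest point. Moving the center a
little along `v` strictly decreases its distance to every farthest point while keeping the other,
strictly nearer, points at distance `< r`; since `P` is finite, this yields an enclosing ball of
radius smaller than `r`.
-/

open Filter Topology RealInnerProductSpace

section InnerProductSpace

variable {E : Type*} [NormedAddCommGroup E] [InnerProductSpace ℝ E]

theorem exists_inner_sub_pos_of_notMem_of_isClosed [CompleteSpace E] {s : Set E} {c : E}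
    (hconv : Convex ℝ s) (hclosed : IsClosed s) (hc : c ∉ s) :
    ∃ v : E, ∀ p ∈ s, 0 < ⟪v, p - c⟫ := by
  obtain ⟨f, u, hfc, hfs⟩ := geometric_hahn_banach_point_closed hconv hclosed hc
  refine ⟨(InnerProductSpace.toDual ℝ E).symm f, fun p hp => ?_⟩
  rw [inner_sub_right, InnerProductSpace.toDual_symm_apply, InnerProductSpace.toDual_symm_apply]
  linarith [hfs p hp]

theorem dist_add_smul_lt_dist {p c v : E} {t : ℝ} (ht : 0 < t)
    (htv : t * ‖v‖ ^ 2 < 2 * ⟪v, p - c⟫) : dist p (c + t • v) < dist p c := by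
  have hsq : dist p (c + t • v) ^ 2 = dist p c ^ 2 - t * (2 * ⟪v, p - c⟫ - t * ‖v‖ ^ 2) := by
    rw [dist_eq_norm, dist_eq_norm, sub_add_eq_sub_sub, norm_sub_sq_real, real_inner_smul_right,
      norm_smul, Real.norm_eq_abs, abs_of_pos ht, real_inner_comm]
    ring
  have hlt : dist p (c + t • v) ^ 2 < dist p c ^ 2 := by
    rw [hsq]
    nlinarith
  exact lt_of_pow_lt_pow_left₀ 2 dist_nonneg hlt

theorem eventually_dist_add_smul_lt_dist {p c v : E} (hv : 0 < ⟪v, p - c⟫) :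
    ∀ᶠ t in 𝓝[>] (0 : ℝ), dist p (c + t • v) < dist p c := by
  have hsmall : ∀ᶠ t in 𝓝 (0 : ℝ), t * ‖v‖ ^ 2 < 2 * ⟪v, p - c⟫ := by
    have hcont : Continuous fun t : ℝ => t * ‖v‖ ^ 2 := by fun_prop
    exact (hcont.tendsto' 0 0 (zero_mul _)).eventually_lt_const (by linarith)
  filter_upwards [nhdsWithin_le_nhds hsmall, self_mem_nhdsWithin] with t htv ht
  exact dist_add_smul_lt_dist ht htv

theorem eventually_dist_add_smul_lt {p c v : E} {r : ℝ} (h : dist p c < r) :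
    ∀ᶠ t in 𝓝 (0 : ℝ), dist p (c + t • v) < r := by
  have hcont : Continuous fun t : ℝ => dist p (c + t • v) := by fun_prop
  exact (hcont.tendsto' 0 _ (by simp)).eventually_lt_const h

end InnerProductSpace

theorem IsMEB.exists_le_dist {d : ℕ} {P : Set (EuclideanSpace ℝ (Fin d))}
    {c : EuclideanSpace ℝ (Fin d)} {r : ℝ} (hmeb : IsMEB P c r) (hfin : P.Finite)
    (c' : EuclideanSpace ℝ (Fin d)) : ∃ p ∈ P, r ≤ dist p c' := by
  by_contra! h
  have hr' : ∀ᶠ r' in 𝓝[<] r, ∀ p ∈ P, dist p c' < r' := hfin.eventually_all.2 fun p hp =>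
    mem_of_superset (Ioo_mem_nhdsLT (h p hp)) fun _ hx => hx.1
  obtain ⟨r', hP, hr'r⟩ := (hr'.and eventually_mem_nhdsWithin).exists
  exact hr'r.not_ge (hmeb.2 c' r' fun p hp => (hP p hp).le)

theorem meb_center_mem_convexHull_of_boundary_general {d : ℕ}
    (P : Set (EuclideanSpace ℝ (Fin d))) (hfin : P.Finite)
    (c : EuclideanSpace ℝ (Fin d)) (r : ℝ) (hmeb : IsMEB P c r) :
    c ∈ convexHull ℝ {p : EuclideanSpace ℝ (Fin d) | p ∈ P ∧ dist p c = r} := by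
  by_contra hc
  have hfar : {p | p ∈ P ∧ dist p c = r}.Finite := hfin.subset fun _ hp => hp.1
  obtain ⟨v, hv⟩ := exists_inner_sub_pos_of_notMem_of_isClosed (convex_convexHull ℝ _)
    (hfar.isClosed_convexHull ℝ) hc
  have hnear : ∀ᶠ t in 𝓝[>] (0 : ℝ), ∀ p ∈ P, dist p (c + t • v) < r := by
    refine hfin.eventually_all.2 fun p hp => ?_
    rcases (hmeb.1 p hp).lt_or_eq with hlt | heq
    · exact nhdsWithin_le_nhds (eventually_dist_add_smul_lt hlt)
    · exact heq ▸ eventually_dist_add_smul_lt_dist (hv p (subset_convexHull ℝ _ ⟨hp, heq⟩))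
  obtain ⟨t, ht⟩ := hnear.exists
  obtain ⟨p, hp, hle⟩ := hmeb.exists_le_dist hfin (c + t • v)
  exact (ht p hp).not_ge hle

/-- the center of the minimum enclosing ball of a finite nonempty set `P` lies in
the convex hull of the points of `P` at distance exactly `r` from the center. -/
theorem meb_center_mem_convexHull_of_boundary {d : ℕ}
    (P : Set (EuclideanSpace ℝ (Fin d))) (hfin : P.Finite) (hne : P.Nonempty)
    (c : EuclideanSpace ℝ (Fin d)) (r : ℝ) (hmeb : IsMEB P c r) :
    c ∈ convexHull ℝ {p : EuclideanSpace ℝ (Fin d) | p ∈ P ∧ dist p c = r} :=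
  meb_center_mem_convexHull_of_boundary_general P hfin c r hmeb
end

section
/- Let S ⊆ S' be finite nonempty sets of points in ℝ^d, let c and r be the center and radius of the minimum enclosing ball of S, and let c' and r' be the center and radius of the minimum enclosing ball of S'. Then r' ≥ √(r² + ‖c − c'‖²). -/
open Filter Topology

theorem dist_sq_lineMap {V P : Type*} [NormedAddCommGroup V] [InnerProductSpace ℝ V]
    [MetricSpace P] [NormedAddTorsor V P] (p a b : P) (t : ℝ) :
    dist p (AffineMap.lineMap a b t) ^ 2 =
      (1 - t) * dist p a ^ 2 + t * dist p b ^ 2 - t * (1 - t) * dist a b ^ 2 := by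
  have hpb : p -ᵥ b = (p -ᵥ a) - (b -ᵥ a) := (vsub_sub_vsub_cancel_right p b a).symm
  rw [dist_comm a b]
  simp only [dist_eq_norm_vsub V, AffineMap.lineMap_apply, vsub_vadd_eq_vsub_sub, hpb]
  rw [norm_sub_sq_real, norm_sub_sq_real, norm_smul, real_inner_smul_right, mul_pow,
    Real.norm_eq_abs, sq_abs]
  ring

namespace IsMEB

variable {d : ℕ} {S : Set (EuclideanSpace ℝ (Fin d))} {c c' : EuclideanSpace ℝ (Fin d)}
  {r r' : ℝ}

theorem nonempty (h : IsMEB S c r) : S.Nonempty := by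
  by_contra hS
  rw [Set.not_nonempty_iff_eq_empty] at hS
  have := h.2 c (r - 1) (by simp [hS])
  linarith

theorem radius_nonneg (h : IsMEB S c r) : 0 ≤ r := by
  obtain ⟨p, hp⟩ := h.nonempty
  exact dist_nonneg.trans (h.1 p hp)

theorem sq_add_one_sub_mul_dist_sq_le (h : IsMEB S c r) (hS : ∀ p ∈ S, dist p c' ≤ r')
    {t : ℝ} (ht₀ : 0 < t) (ht₁ : t ≤ 1) :
    r ^ 2 + (1 - t) * dist c c' ^ 2 ≤ r' ^ 2 := by
  set M := (1 - t) * r ^ 2 + t * r' ^ 2 - t * (1 - t) * dist c c' ^ 2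
  have hball : ∀ p ∈ S, dist p (AffineMap.lineMap c c' t) ^ 2 ≤ M := by
    intro p hp
    rw [dist_sq_lineMap]
    dsimp only [M]
    gcongr
    exacts [h.1 p hp, hS p hp]
  obtain ⟨p, hp⟩ := h.nonempty
  have hM : 0 ≤ M := (sq_nonneg _).trans (hball p hp)
  have hrM : r ≤ √M := h.2 _ _ fun p hp ↦ Real.le_sqrt_of_sq_le (hball p hp)
  have hr2M : r ^ 2 ≤ M := (Real.le_sqrt h.radius_nonneg hM).1 hrM
  refine le_of_mul_le_mul_left ?_ ht₀
  linarith

theorem sq_add_dist_sq_le (h : IsMEB S c r) (hS : ∀ p ∈ S, dist p c' ≤ r') :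
    r ^ 2 + dist c c' ^ 2 ≤ r' ^ 2 := by
  have hlim : Tendsto (fun t : ℝ ↦ r ^ 2 + (1 - t) * dist c c' ^ 2) (𝓝[>] 0)
      (𝓝 (r ^ 2 + dist c c' ^ 2)) := by
    have hcont : Continuous fun t : ℝ ↦ r ^ 2 + (1 - t) * dist c c' ^ 2 := by fun_prop
    simpa using (hcont.tendsto 0).mono_left nhdsWithin_le_nhds
  refine le_of_tendsto hlim ?_
  filter_upwards [Ioc_mem_nhdsGT one_pos] with t ht
  exact h.sq_add_one_sub_mul_dist_sq_le hS ht.1 ht.2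

end IsMEB

theorem meb_radius_monotone_sqrt_general {d : ℕ}
    (S S' : Set (EuclideanSpace ℝ (Fin d))) (hsub : S ⊆ S')
    (c c' : EuclideanSpace ℝ (Fin d)) (r r' : ℝ)
    (hmeb : IsMEB S c r) (hmeb' : IsMEB S' c' r') :
    Real.sqrt (r ^ 2 + (dist c c') ^ 2) ≤ r' :=
  Real.sqrt_le_iff.2
    ⟨hmeb'.radius_nonneg, hmeb.sq_add_dist_sq_le fun p hp ↦ hmeb'.1 p (hsub hp)⟩

/-- if `S ⊆ S'` are finite nonempty sets with minimum enclosing balls of centers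
`c, c'` and radii `r, r'` respectively, then `r' ≥ √(r² + ‖c − c'‖²)`. -/
theorem meb_radius_monotone_sqrt {d : ℕ}
    (S S' : Set (EuclideanSpace ℝ (Fin d))) (hsub : S ⊆ S')
    (hfin : S.Finite) (hne : S.Nonempty) (hfin' : S'.Finite) (hne' : S'.Nonempty)
    (c c' : EuclideanSpace ℝ (Fin d)) (r r' : ℝ)
    (hmeb : IsMEB S c r) (hmeb' : IsMEB S' c' r') :
    Real.sqrt (r ^ 2 + (dist c c') ^ 2) ≤ r' :=
  meb_radius_monotone_sqrt_general S S' hsub c c' r r' hmeb hmeb'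
end

section
/- Let S ⊆ S' be finite nonempty sets of points in ℝ^d, let c and r̃ be the center and radius of the minimum enclosing ball of S, and let r̃' be the radius of the minimum enclosing ball of S'. Let R̂ > 0 with r̃ ≤ R̂. If there exists a point v' ∈ S' with ‖v' − c‖ > R̂, then r̃' ≥ R̂/2 + r̃²/(2R̂). -/
open scoped RealInnerProductSpace

set_option maxHeartbeats 1000000

/-- Key lemma: for any point `x`, some point of `S` is at squared distance at least
`r² + dist x c²` from `x`. -/
lemma meb_far {d : ℕ} (S : Set (EuclideanSpace ℝ (Fin d))) (hfin : S.Finite) (hne : S.Nonempty)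
    (c : EuclideanSpace ℝ (Fin d)) (r : ℝ) (hmeb : IsMEB S c r)
    (x : EuclideanSpace ℝ (Fin d)) :
    ∃ p ∈ S, r ^ 2 + dist x c ^ 2 ≤ dist p x ^ 2 := by
  by_contra h
  push_neg at h
  obtain ⟨hcov, hmin⟩ := hmeb
  obtain ⟨p₀, hp₀⟩ := hne
  have hr0 : 0 ≤ r := le_trans dist_nonneg (hcov p₀ hp₀)
  set u : EuclideanSpace ℝ (Fin d) := x - c with hu
  have hg : ∀ p ∈ S, 0 < r ^ 2 - ‖p - c‖ ^ 2 + 2 * ⟪p - c, u⟫ := by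
    intro p hp
    have h1 := h p hp
    have h2 : dist p x ^ 2 = ‖p - c‖ ^ 2 - 2 * ⟪p - c, u⟫ + ‖u‖ ^ 2 := by
      rw [dist_eq_norm, show p - x = (p - c) - u by rw [hu]; abel,
        norm_sub_sq_real]
    have h3 : dist x c ^ 2 = ‖u‖ ^ 2 := by rw [dist_eq_norm, hu]
    nlinarith
  -- take epsilon as the min of the positive quantity over the finite set
  set T : Finset (EuclideanSpace ℝ (Fin d)) := hfin.toFinset with hT
  have hTne : T.Nonempty := ⟨p₀, hfin.mem_toFinset.mpr hp₀⟩
  set ε : ℝ := T.inf' hTne (fun p => r ^ 2 - ‖p - c‖ ^ 2 + 2 * ⟪p - c, u⟫) with hε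
  have hε0 : 0 < ε := by
    rw [hε, Finset.lt_inf'_iff]
    intro p hp
    exact hg p (hfin.mem_toFinset.mp hp)
  have hεle : ∀ p ∈ S, ε ≤ r ^ 2 - ‖p - c‖ ^ 2 + 2 * ⟪p - c, u⟫ := by
    intro p hp
    exact Finset.inf'_le _ (hfin.mem_toFinset.mpr hp)
  set t : ℝ := min 1 (ε / (2 * (‖u‖ ^ 2 + 1))) with ht
  have hu1 : (0:ℝ) < ‖u‖ ^ 2 + 1 := by positivity
  have ht0 : 0 < t := by
    apply lt_min one_pos
    positivity
  have ht1 : t ≤ 1 := min_le_left _ _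
  have htu : t * ‖u‖ ^ 2 ≤ ε / 2 := by
    have h1 : t ≤ ε / (2 * (‖u‖ ^ 2 + 1)) := min_le_right _ _
    have h2 : t * (‖u‖ ^ 2 + 1) ≤ ε / 2 := by
      rw [le_div_iff₀ (show (0:ℝ) < 2 * (‖u‖ ^ 2 + 1) by positivity)] at h1
      nlinarith
    nlinarith [sq_nonneg ‖u‖, ht0.le]
  set c₂ : EuclideanSpace ℝ (Fin d) := c + t • u with hc₂
  set A : ℝ := r ^ 2 - t * ε / 2 with hA
  have hdist : ∀ p ∈ S, dist p c₂ ^ 2 ≤ A := by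
    intro p hp
    have h2 : dist p c₂ ^ 2 = ‖p - c‖ ^ 2 - 2 * (t * ⟪p - c, u⟫) + t ^ 2 * ‖u‖ ^ 2 := by
      rw [dist_eq_norm, show p - c₂ = (p - c) - t • u by rw [hc₂]; abel,
        norm_sub_sq_real, real_inner_smul_right, norm_smul]
      simp [mul_pow]
    have h3 := hεle p hp
    have h4 : ‖p - c‖ ^ 2 ≤ r ^ 2 := by
      have := hcov p hp
      rw [dist_eq_norm] at this
      nlinarith [norm_nonneg (p - c)]
    have h5 : t ^ 2 * ‖u‖ ^ 2 ≤ t * (ε / 2) := by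
      have : t * (t * ‖u‖ ^ 2) ≤ t * (ε / 2) :=
        mul_le_mul_of_nonneg_left htu ht0.le
      nlinarith
    have k1 : t * ε ≤ t * (r ^ 2 - ‖p - c‖ ^ 2 + 2 * ⟪p - c, u⟫) :=
      mul_le_mul_of_nonneg_left h3 ht0.le
    have k2 : (1 - t) * ‖p - c‖ ^ 2 ≤ (1 - t) * r ^ 2 :=
      mul_le_mul_of_nonneg_left h4 (by linarith)
    rw [h2, hA]
    linarith [k1, k2, h5]
  have hA0 : 0 ≤ A := le_trans (sq_nonneg _) (hdist p₀ hp₀)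
  have hcontra : r ≤ Real.sqrt A := by
    apply hmin c₂ (Real.sqrt A)
    intro p hp
    have := hdist p hp
    nlinarith [Real.sq_sqrt hA0, Real.sqrt_nonneg A, dist_nonneg (x := p) (y := c₂)]
  have hle : r ^ 2 ≤ A := by
    nlinarith [Real.sq_sqrt hA0, Real.sqrt_nonneg A]
  rw [hA] at hle
  have hpos : 0 < t * ε := mul_pos ht0 hε0
  linarith

/-- if `S ⊆ S'` are finite nonempty sets, the MEB of `S` has center `c` and radius
`r̃ ≤ R̂` with `R̂ > 0`, the MEB of `S'` has radius `r̃'`, and some `v' ∈ S'` satisfies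
`‖v' − c‖ > R̂`, then `r̃' ≥ R̂/2 + r̃²/(2R̂)`. -/
theorem meb_radius_progress {d : ℕ}
    (S S' : Set (EuclideanSpace ℝ (Fin d))) (hsub : S ⊆ S')
    (hfin : S.Finite) (hne : S.Nonempty) (hfin' : S'.Finite) (hne' : S'.Nonempty)
    (c c' : EuclideanSpace ℝ (Fin d)) (r r' : ℝ)
    (hmeb : IsMEB S c r) (hmeb' : IsMEB S' c' r')
    (R : ℝ) (hR : 0 < R) (hrR : r ≤ R)
    (hex : ∃ v' ∈ S', R < dist v' c) :
    R / 2 + r ^ 2 / (2 * R) ≤ r' := by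
  obtain ⟨v', hv', hvR⟩ := hex
  obtain ⟨p, hp, hpfar⟩ := meb_far S hfin hne c r hmeb c'
  obtain ⟨hcov', _⟩ := hmeb'
  obtain ⟨p₀, hp₀⟩ := hne
  have hr0 : 0 ≤ r := le_trans dist_nonneg (hmeb.1 p₀ hp₀)
  set D : ℝ := dist c' c with hD
  have hD0 : 0 ≤ D := dist_nonneg
  have hpc' : dist p c' ≤ r' := hcov' p (hsub hp)
  have hr'0 : 0 ≤ r' := le_trans dist_nonneg hpc'
  have h1 : r ^ 2 + D ^ 2 ≤ r' ^ 2 := by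
    nlinarith [dist_nonneg (x := p) (y := c')]
  have h2 : R ≤ r' + D := by
    have hv'c' : dist v' c' ≤ r' := hcov' v' hv'
    have htri : dist v' c ≤ dist v' c' + dist c' c := dist_triangle v' c' c
    linarith
  rw [div_add_div _ _ (by norm_num) (by positivity), div_le_iff₀ (by positivity)]
  rcases le_or_gt D (R - r') with hcase | hcase
  · have : R - r' ≤ D := by linarith
    nlinarith [sq_nonneg (D - (R - r'))]
  · rcases le_or_gt r' R with hc2 | hc2
    · have hsq : (R - r') ^ 2 ≤ D ^ 2 := pow_le_pow_left₀ (by linarith) hcase.le 2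
      nlinarith
    · nlinarith [mul_le_mul hrR hrR hr0 hR.le, mul_pos hR (sub_pos.mpr hc2)]
end

section
/- Let (λ_i)_{i≥1} be a sequence of real numbers with λ_1 = 0 and λ_{i+1} ≥ (1 + λ_i²)/2 for all i ≥ 1. Then λ_i ≥ 1 − 2/(i+1) for every i ≥ 1. -/
/-- if `λ₁ = 0` and `λ_{i+1} ≥ (1 + λ_i²)/2` for all `i ≥ 1`, then
`λ_i ≥ 1 − 2/(i+1)` for every `i ≥ 1`. -/
theorem lambda_lower_bound (lam : ℕ → ℝ) (h1 : lam 1 = 0)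
    (hrec : ∀ i : ℕ, 1 ≤ i → (1 + lam i ^ 2) / 2 ≤ lam (i + 1)) :
    ∀ i : ℕ, 1 ≤ i → 1 - 2 / ((i : ℝ) + 1) ≤ lam i := by
  intro i hi
  induction i with
  | zero => omega
  | succ n ih =>
    rcases Nat.eq_or_lt_of_le hi with h | h
    · simp [← h, h1]; norm_num
    · have hn : 1 ≤ n := by omega
      have hb := ih hn
      have hnr : (1:ℝ) ≤ n := by exact_mod_cast hn
      have hpos : (0:ℝ) < (n:ℝ) + 1 := by linarith
      have hb0 : (0:ℝ) ≤ 1 - 2 / ((n:ℝ) + 1) := by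
        rw [sub_nonneg, div_le_one hpos]; linarith
      have hsq : (1 - 2 / ((n:ℝ) + 1)) ^ 2 ≤ lam n ^ 2 := by
        apply sq_le_sq' <;> nlinarith
      have h2 := hrec n hn
      have key : 1 - 2 / ((n:ℝ) + 1 + 1) ≤ (1 + (1 - 2 / ((n:ℝ) + 1)) ^ 2) / 2 := by
        have h2pos : (0:ℝ) < (n:ℝ) + 1 + 1 := by linarith
        rw [sub_le_iff_le_add, div_add_div _ _ (by norm_num : (2:ℝ) ≠ 0) (ne_of_gt h2pos),
          le_div_iff₀ (by positivity)]
        have hexp : (1 - 2 / ((n:ℝ) + 1)) ^ 2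
            = 1 - 4 / ((n:ℝ)+1) + 4 / (((n:ℝ)+1)*((n:ℝ)+1)) := by
          field_simp; ring
        rw [hexp]
        have e1 : (4 / ((n:ℝ) + 1)) * ((n:ℝ) + 1) = 4 :=
          div_mul_cancel₀ 4 (by positivity)
        have e2 : (4 / (((n:ℝ)+1)*((n:ℝ)+1))) * (((n:ℝ)+1)*((n:ℝ)+1)) = 4 :=
          div_mul_cancel₀ 4 (by positivity)
        nlinarith [e1, e2, mul_pos hpos hpos, mul_pos hpos h2pos, hnr,
          div_nonneg (by norm_num : (0:ℝ) ≤ 4) (le_of_lt (mul_pos hpos hpos))]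
      push_cast
      nlinarith
end

section
/- Let (λ_i)_{i≥1} be a sequence of real numbers with λ_1 = 0 and λ_{i+1} ≥ (1 + λ_i²)/2 for all i ≥ 1. Then λ_i > 1 − 2/(i+1) for every i ≥ 2; in particular, equality in the bound λ_i ≥ 1 − 2/(i+1) can hold only when i = 1. -/
/-- if `λ₁ = 0` and `λ_{i+1} ≥ (1 + λ_i²)/2` for all `i ≥ 1`, then
`λ_i > 1 − 2/(i+1)` for every `i ≥ 2`; in particular equality `λ_i = 1 − 2/(i+1)` with `i ≥ 1`
forces `i = 1`. -/
theorem lambda_strict_lower_bound (lam : ℕ → ℝ) (h1 : lam 1 = 0)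
    (hrec : ∀ i : ℕ, 1 ≤ i → (1 + lam i ^ 2) / 2 ≤ lam (i + 1)) :
    (∀ i : ℕ, 2 ≤ i → 1 - 2 / ((i : ℝ) + 1) < lam i) ∧
      ∀ i : ℕ, 1 ≤ i → lam i = 1 - 2 / ((i : ℝ) + 1) → i = 1 := by
  have key : ∀ i : ℕ, 2 ≤ i → 1 - 2 / ((i : ℝ) + 1) < lam i := by
    intro i hi
    induction i, hi using Nat.le_induction with
    | base =>
      have h := hrec 1 le_rfl
      rw [h1] at h
      norm_num at h ⊢
      linarith
    | succ n hn ih =>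
      have hrecn := hrec n (by omega)
      have h3 : (3:ℝ) ≤ (n:ℝ) + 1 := by
        have : (2:ℝ) ≤ (n:ℝ) := by exact_mod_cast hn
        linarith
      have hpos : (0:ℝ) < (n:ℝ) + 1 := by linarith
      have hb : 2 / ((n:ℝ)+1) ≤ 2/3 := by
        apply div_le_div_of_nonneg_left (by norm_num) (by norm_num) h3
      have hlpos : (0:ℝ) < lam n := by linarith
      have hsq : (1 - 2/((n:ℝ)+1))^2 < lam n ^ 2 := by nlinarith
      have hkey : 1 - 2/((n:ℝ)+2) < (1 + (1 - 2/((n:ℝ)+1))^2) / 2 := by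
        have hpos2 : (0:ℝ) < (n:ℝ) + 2 := by linarith
        have h1' : 2 / ((n:ℝ)+1) * ((n:ℝ)+1) = 2 := div_mul_cancel₀ 2 (ne_of_gt hpos)
        have h2' : 2 / ((n:ℝ)+2) * ((n:ℝ)+2) = 2 := div_mul_cancel₀ 2 (ne_of_gt hpos2)
        have hd1 : 0 < 2 / ((n:ℝ)+1) := by positivity
        have hd2 : 0 < 2 / ((n:ℝ)+2) := by positivity
        nlinarith [mul_pos hd1 hd1, mul_pos hpos hpos2, sq_nonneg (2/((n:ℝ)+1) - 2/((n:ℝ)+2))]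
      push_cast
      have : ((n:ℝ) + 1) + 1 = (n:ℝ) + 2 := by ring
      rw [this]
      linarith
  refine ⟨key, fun i hi heq => ?_⟩
  by_contra h
  have hi2 : 2 ≤ i := by omega
  exact absurd heq (ne_of_gt (key i hi2))
end

section
/- Let Q be a finite nonempty set of points in ℝ^d, and let c_Q and r_Q be the center and radius of the minimum enclosing ball of Q. Let (c_t)_{t≥1} be a sequence of points defined by choosing c_1 ∈ Q arbitrarily and, for each t ≥ 1, setting c_{t+1} = c_t + (1/(t+1))·(q_t − c_t), where q_t ∈ Q is a point of Q farthest from c_t (i.e., ‖q_t − c_t‖ = max_{q ∈ Q} ‖q − c_t‖). Then for every t ≥ 1, ‖c_Q − c_t‖ ≤ r_Q/√t. -/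
/-!
Two facts drive the estimate. First, moving a point `x` towards `y` by a fraction `s` changes
squared distances by the exact identity
`|p - x_s|² = (1 - s)|p - x|² + s|p - y|² - s(1 - s)|x - y|²`.
Second, the MEB center `c_Q` is not improvable: if all of `Q` lay within `R` of a point `x`,
moving `c_Q` slightly towards `x` and applying the identity would produce an enclosing ball of
radius `< r_Q` unless `r_Q² + |x - c_Q|² ≤ R²`. Applied with `R = |q_t - c_t|`, the identity for the
update `c_{t+1}` gives `|c_Q - c_{t+1}|² ≤ (1 - a)²|c_Q - c_t|² + a² r_Q²` with `a = 1/(t+1)`,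
and the bound `r_Q²/t` propagates by induction.
-/

open Filter Topology

section ConvexCombination

variable {E : Type*} [NormedAddCommGroup E] [InnerProductSpace ℝ E]

theorem dist_add_smul_sub_sq (p x y : E) (s : ℝ) :
    dist p (x + s • (y - x)) ^ 2 =
      (1 - s) * dist p x ^ 2 + s * dist p y ^ 2 - s * (1 - s) * dist x y ^ 2 := by
  have hxs : ‖(p - x) - s • (y - x)‖ ^ 2 =
      ‖p - x‖ ^ 2 - 2 * s * inner ℝ (p - x) (y - x) + s ^ 2 * ‖y - x‖ ^ 2 := by
    rw [norm_sub_sq_real, inner_smul_right, norm_smul, mul_pow, Real.norm_eq_abs, sq_abs]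
    ring
  have hy := norm_sub_sq_real (p - x) (y - x)
  rw [dist_eq_norm, dist_eq_norm, dist_eq_norm, dist_eq_norm, norm_sub_rev x y,
    show p - (x + s • (y - x)) = (p - x) - s • (y - x) by abel,
    show p - y = (p - x) - (y - x) by abel, hxs, hy]
  ring

end ConvexCombination

namespace IsMEB

variable {d : ℕ} {Q : Set (EuclideanSpace ℝ (Fin d))} {cQ : EuclideanSpace ℝ (Fin d)} {rQ : ℝ}

theorem nonempty_s17 (hmeb : IsMEB Q cQ rQ) : Q.Nonempty := by
  by_contra hQ
  have := hmeb.2 cQ (rQ - 1) fun p hp => absurd ⟨p, hp⟩ hQ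
  linarith

theorem radius_nonneg_s17 (hmeb : IsMEB Q cQ rQ) : 0 ≤ rQ :=
  let ⟨p, hp⟩ := hmeb.nonempty_s17
  dist_nonneg.trans (hmeb.1 p hp)

theorem sq_radius_add_sq_dist_le (hmeb : IsMEB Q cQ rQ) {x : EuclideanSpace ℝ (Fin d)} {R : ℝ}
    (hR : ∀ p ∈ Q, dist p x ≤ R) : rQ ^ 2 + dist x cQ ^ 2 ≤ R ^ 2 := by
  set D := dist x cQ
  obtain ⟨p₀, hp₀⟩ := hmeb.nonempty_s17
  have hshift : ∀ s ∈ Set.Ioo (0 : ℝ) 1, rQ ^ 2 ≤ R ^ 2 - (1 - s) * D ^ 2 := by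
    rintro s ⟨hs0, hs1⟩
    set ρsq := (1 - s) * rQ ^ 2 + s * R ^ 2 - s * (1 - s) * D ^ 2
    have hball : ∀ p ∈ Q, dist p (cQ + s • (x - cQ)) ^ 2 ≤ ρsq := by
      intro p hp
      have hpc := pow_le_pow_left₀ dist_nonneg (hmeb.1 p hp) 2
      have hpx := pow_le_pow_left₀ dist_nonneg (hR p hp) 2
      rw [dist_add_smul_sub_sq, dist_comm cQ x]
      nlinarith
    have hmin : rQ ≤ √ρsq := hmeb.2 _ _ fun p hp => Real.le_sqrt_of_sq_le (hball p hp)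
    have hρ : 0 ≤ ρsq := (sq_nonneg _).trans (hball p₀ hp₀)
    have := (Real.le_sqrt hmeb.radius_nonneg_s17 hρ).1 hmin
    nlinarith
  have hlim : Tendsto (fun s : ℝ => R ^ 2 - (1 - s) * D ^ 2) (𝓝[>] 0) (𝓝 (R ^ 2 - D ^ 2)) := by
    have hcont : Continuous fun s : ℝ => R ^ 2 - (1 - s) * D ^ 2 := by fun_prop
    simpa using (hcont.tendsto 0).mono_left nhdsWithin_le_nhds
  have := ge_of_tendsto hlim (by filter_upwards [Ioo_mem_nhdsGT one_pos] using hshift)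
  linarith

theorem sq_dist_add_smul_sub_le (hmeb : IsMEB Q cQ rQ) {x q : EuclideanSpace ℝ (Fin d)}
    (hq : q ∈ Q) (hfar : ∀ p ∈ Q, dist p x ≤ dist q x) {a : ℝ} (ha0 : 0 ≤ a) (ha1 : a ≤ 1) :
    dist cQ (x + a • (q - x)) ^ 2 ≤ (1 - a) ^ 2 * dist cQ x ^ 2 + a ^ 2 * rQ ^ 2 := by
  have hfar_sq := mul_le_mul_of_nonneg_left (hmeb.sq_radius_add_sq_dist_le hfar)
    (mul_nonneg ha0 (sub_nonneg.2 ha1))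
  have hq_sq := mul_le_mul_of_nonneg_left
    (pow_le_pow_left₀ dist_nonneg (dist_comm cQ q ▸ hmeb.1 q hq) 2) ha0
  rw [dist_comm x cQ] at hfar_sq
  rw [dist_add_smul_sub_sq, dist_comm x q]
  nlinarith

end IsMEB

theorem badoiu_clarkson_convergence_general {d : ℕ}
    (Q : Set (EuclideanSpace ℝ (Fin d)))
    (cQ : EuclideanSpace ℝ (Fin d)) (rQ : ℝ) (hmeb : IsMEB Q cQ rQ)
    (c q : ℕ → EuclideanSpace ℝ (Fin d))
    (hc1 : c 1 ∈ Q)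
    (hqmem : ∀ t : ℕ, 1 ≤ t → q t ∈ Q)
    (hqfar : ∀ t : ℕ, 1 ≤ t → ∀ p ∈ Q, dist p (c t) ≤ dist (q t) (c t))
    (hrec : ∀ t : ℕ, 1 ≤ t → c (t + 1) = c t + (1 / ((t : ℝ) + 1)) • (q t - c t)) :
    ∀ t : ℕ, 1 ≤ t → dist cQ (c t) ≤ rQ / Real.sqrt t := by
  have hsq : ∀ t : ℕ, 1 ≤ t → dist cQ (c t) ^ 2 ≤ rQ ^ 2 / t := by
    intro t ht
    induction t, ht using Nat.le_induction with
    | base => simpa [dist_comm] using pow_le_pow_left₀ dist_nonneg (hmeb.1 _ hc1) 2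
    | succ t ht ih =>
      have ht0 : (0 : ℝ) < t := by exact_mod_cast ht
      set a : ℝ := 1 / ((t : ℝ) + 1) with ha
      have ha1 : a ≤ 1 := by rw [ha, div_le_one (by positivity)]; linarith
      calc dist cQ (c (t + 1)) ^ 2 ≤ (1 - a) ^ 2 * dist cQ (c t) ^ 2 + a ^ 2 * rQ ^ 2 := by
            rw [hrec t ht]
            exact hmeb.sq_dist_add_smul_sub_le (hqmem t ht) (hqfar t ht) (by positivity) ha1
        _ ≤ (1 - a) ^ 2 * (rQ ^ 2 / t) + a ^ 2 * rQ ^ 2 := by gcongr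
        _ = rQ ^ 2 / ((t + 1 : ℕ) : ℝ) := by
            rw [ha]
            push_cast
            field_simp
            ring
  intro t ht
  calc dist cQ (c t) ≤ √(rQ ^ 2 / t) := Real.le_sqrt_of_sq_le (hsq t ht)
    _ = rQ / √t := by rw [Real.sqrt_div (sq_nonneg _), Real.sqrt_sq hmeb.radius_nonneg_s17]

/-- let `Q` be a finite nonempty set with MEB center `c_Q` and radius `r_Q`, and
let `(c_t)` be defined by `c₁ ∈ Q` and `c_{t+1} = c_t + (1/(t+1))·(q_t − c_t)` where `q_t ∈ Q`
is farthest from `c_t`. Then `‖c_Q − c_t‖ ≤ r_Q/√t` for every `t ≥ 1`. -/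
theorem badoiu_clarkson_convergence {d : ℕ}
    (Q : Set (EuclideanSpace ℝ (Fin d))) (hfin : Q.Finite) (hne : Q.Nonempty)
    (cQ : EuclideanSpace ℝ (Fin d)) (rQ : ℝ) (hmeb : IsMEB Q cQ rQ)
    (c q : ℕ → EuclideanSpace ℝ (Fin d))
    (hc1 : c 1 ∈ Q)
    (hqmem : ∀ t : ℕ, 1 ≤ t → q t ∈ Q)
    (hqfar : ∀ t : ℕ, 1 ≤ t → ∀ p ∈ Q, dist p (c t) ≤ dist (q t) (c t))
    (hrec : ∀ t : ℕ, 1 ≤ t → c (t + 1) = c t + (1 / ((t : ℝ) + 1)) • (q t - c t)) :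
    ∀ t : ℕ, 1 ≤ t → dist cQ (c t) ≤ rQ / Real.sqrt t :=
  badoiu_clarkson_convergence_general Q cQ rQ hmeb c q hc1 hqmem hqfar hrec
end
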